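/- Let X₁ be a real random variable Gaussian with mean μ₁ and variance σ₁² (σ₁ > 0), let ρ ∈ [−1, 1], σ₂ ≥ 0, μ₂ ∈ ℝ, and let W be independent of X₁ and Gaussian with mean 0 and variance (1 − ρ²)σ₂² > 0. Define X₂ := μ₂ + ρ·(σ₂/σ₁)·(X₁ − μ₁) + W, so that (X₁, X₂) is a bivariate Gaussian vector with correlation ρ. Then for all β₀, β₁, β₂ ∈ ℝ, almost surely, |E[σ(β₀ + β₁X₁ + β₂X₂) | σ(X₁)] − σ((α₀ + α₁X₁)/√(1 + (π/8)·β₂²(1 − ρ²)σ₂²))| ≤ 2·‖δ‖_∞, where α₀ = β₀ + β₂μ₂ − β₂ρ(σ₂/σ₁)μ₁ and α₁ = β₁ + β₂ρσ₂/σ₁. -/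

import Mathlib

open MeasureTheory ProbabilityTheory Real
open scoped NNReal

/-- The standard normal CDF `Φ(t) = (2π)^{-1/2} ∫_{-∞}^t e^{-s²/2} ds`. -/
noncomputable def stdNormalCDF (t : ℝ) : ℝ :=
  ∫ s in Set.Iic t, Real.exp (-s ^ 2 / 2) / Real.sqrt (2 * Real.pi)

/-- The logistic (sigmoid) function `σ(t) = 1/(1 + e^{-t})`. -/
noncomputable def logisticFn (t : ℝ) : ℝ := 1 / (1 + Real.exp (-t))

/-- `δ(t) = Φ(t) − σ(√(8/π)·t)`. -/
noncomputable def deltaFn (t : ℝ) : ℝ :=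
  stdNormalCDF t - logisticFn (Real.sqrt (8 / Real.pi) * t)

/-!
Conditionally on `X₁`, the noise `W` keeps its law `N(0, v)` by independence, so the conditional
expectation is the Gaussian average `x ↦ E σ(a(x) + β₂ W)`. Write `σ(t) = Φ(κt) − δ(κt)` with
`κ = √(π/8)`. The `Φ`-part averages exactly: `E Φ(b + cW) = P(Z − cW ≤ b)` for a standard normal
`Z` independent of `W`, and `Z − cW ~ N(0, 1 + c²v)`, so it equals `Φ(b / √(1 + c²v))`, which is
again `σ + δ` at the rescaled point. The two `δ`-terms contribute at most `‖δ‖_∞` each.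
-/
open Set

lemma stdNormalCDF_eq_cdf : stdNormalCDF = cdf (gaussianReal 0 1) := by
  ext t
  rw [cdf_eq_real, measureReal_def, gaussianReal_apply_eq_integral 0 one_ne_zero,
    ENNReal.toReal_ofReal
      (setIntegral_nonneg measurableSet_Iic fun _ _ ↦ gaussianPDFReal_nonneg _ _ _)]
  refine setIntegral_congr_fun measurableSet_Iic fun s _ ↦ ?_
  simp [gaussianPDFReal, div_eq_inv_mul]

lemma cdf_conv_eq_integral (μ ν : Measure ℝ) [IsProbabilityMeasure μ] [IsProbabilityMeasure ν]
    (b : ℝ) :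
    cdf (μ ∗ ν) b = ∫ y, cdf μ (b - y) ∂ν := by
  have hpre (y : ℝ) :
      (fun x ↦ (x, y)) ⁻¹' ((fun p : ℝ × ℝ ↦ p.1 + p.2) ⁻¹' Iic b) = Iic (b - y) := by
    ext x; simp [le_sub_iff_add_le]
  simp_rw [cdf_eq_real, measureReal_def]
  rw [Measure.conv, Measure.map_apply (by fun_prop) measurableSet_Iic,
    Measure.prod_apply_symm (measurableSet_Iic.preimage (by fun_prop)), ← integral_toReal]
  · simp_rw [hpre]
  · exact (measurable_measure_prodMk_right (measurableSet_Iic.preimage (by fun_prop))).aemeasurable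
  · exact ae_of_all _ fun _ ↦ measure_lt_top _ _

lemma cdf_gaussianReal_zero_eq_cdf_div_sqrt {v : ℝ≥0} (hv : v ≠ 0) (b : ℝ) :
    cdf (gaussianReal 0 v) b = cdf (gaussianReal 0 1) (b / √v) := by
  have hv' : 0 < √(v : ℝ) := Real.sqrt_pos.2 (by positivity)
  have hmap : (gaussianReal 0 1).map (√(v : ℝ) * ·) = gaussianReal 0 v := by
    rw [gaussianReal_map_const_mul]; congr 1
    · simp
    · ext; simp
  rw [cdf_eq_real, cdf_eq_real, ← hmap, measureReal_def, measureReal_def,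
    Measure.map_apply (by fun_prop) measurableSet_Iic]
  congr 2; ext x; simp [le_div_iff₀ hv', mul_comm]

lemma integral_stdNormalCDF_affine_gaussianReal (b c : ℝ) (v : ℝ≥0) :
    ∫ w, stdNormalCDF (b + c * w) ∂gaussianReal 0 v = stdNormalCDF (b / √(1 + c ^ 2 * v)) := by
  have hmap : (gaussianReal 0 v).map (-c * ·) = gaussianReal 0 (.mk (c ^ 2) (sq_nonneg _) * v) := by
    simpa using gaussianReal_map_const_mul (μ := 0) (v := v) (-c)
  have hvar : (1 : ℝ≥0) + .mk (c ^ 2) (sq_nonneg _) * v ≠ 0 := by positivity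
  rw [stdNormalCDF_eq_cdf]
  calc ∫ w, cdf (gaussianReal 0 1) (b + c * w) ∂gaussianReal 0 v
      = ∫ y, cdf (gaussianReal 0 1) (b - y) ∂(gaussianReal 0 v).map (-c * ·) := by
        rw [integral_map (f := fun y ↦ cdf (gaussianReal 0 1) (b - y)) (by fun_prop)
          ((cdf _).mono.measurable.comp (by fun_prop)).aestronglyMeasurable]
        simp [sub_eq_add_neg]
    _ = cdf (gaussianReal 0 (1 + .mk (c ^ 2) (sq_nonneg _) * v)) b := by
        rw [hmap, ← cdf_conv_eq_integral, gaussianReal_conv_gaussianReal, zero_add]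
    _ = cdf (gaussianReal 0 1) (b / √(1 + c ^ 2 * v)) := by
        rw [cdf_gaussianReal_zero_eq_cdf_div_sqrt hvar]; simp

lemma measurable_stdNormalCDF : Measurable stdNormalCDF :=
  stdNormalCDF_eq_cdf ▸ (cdf _).mono.measurable

lemma continuous_logisticFn : Continuous logisticFn :=
  continuous_const.div (by fun_prop) fun t ↦ by positivity

lemma logisticFn_nonneg (t : ℝ) : 0 ≤ logisticFn t := by
  unfold logisticFn; positivity

lemma logisticFn_le_one (t : ℝ) : logisticFn t ≤ 1 :=
  div_le_one_of_le₀ (by linarith [exp_pos (-t)]) (by positivity)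

lemma abs_deltaFn_le_one (t : ℝ) : |deltaFn t| ≤ 1 := by
  rw [deltaFn, stdNormalCDF_eq_cdf]
  exact abs_sub_le_of_nonneg_of_le (cdf_nonneg _ _) (cdf_le_one _ _) (logisticFn_nonneg _)
    (logisticFn_le_one _)

lemma abs_deltaFn_le_iSup (t : ℝ) : |deltaFn t| ≤ ⨆ s, |deltaFn s| :=
  le_ciSup (f := fun s ↦ |deltaFn s|) ⟨1, by rintro _ ⟨s, rfl⟩; exact abs_deltaFn_le_one s⟩ t

lemma logisticFn_eq_stdNormalCDF_sub_deltaFn (t : ℝ) :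
    logisticFn t = stdNormalCDF (√(π / 8) * t) - deltaFn (√(π / 8) * t) := by
  have h : √(8 / π) * √(π / 8) = 1 := by
    rw [← Real.sqrt_mul (by positivity), div_mul_div_comm, mul_comm 8, div_self (by positivity),
      Real.sqrt_one]
  rw [deltaFn, ← mul_assoc, h, one_mul, sub_sub_cancel]

lemma abs_integral_logisticFn_gaussianReal_sub_le (a c : ℝ) (v : ℝ≥0) :
    |∫ w, logisticFn (a + c * w) ∂gaussianReal 0 v - logisticFn (a / √(1 + π / 8 * (c ^ 2 * v)))|
      ≤ 2 * ⨆ t, |deltaFn t| := by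
  have hσ := logisticFn_eq_stdNormalCDF_sub_deltaFn
  set κ := √(π / 8)
  set s := √(1 + π / 8 * (c ^ 2 * v))
  have hκ : κ ^ 2 = π / 8 := Real.sq_sqrt (by positivity)
  have hΦ : Integrable (fun w ↦ stdNormalCDF (κ * a + κ * c * w)) (gaussianReal 0 v) := by
    refine .of_bound (measurable_stdNormalCDF.comp (by fun_prop)).aestronglyMeasurable 1
      (ae_of_all _ fun w ↦ ?_)
    rw [stdNormalCDF_eq_cdf, Real.norm_of_nonneg (cdf_nonneg _ _)]
    exact cdf_le_one _ _
  have hδ : Integrable (fun w ↦ deltaFn (κ * (a + c * w))) (gaussianReal 0 v) := by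
    refine .of_bound ?_ 1 (ae_of_all _ fun w ↦ abs_deltaFn_le_one _)
    exact (measurable_stdNormalCDF.sub (continuous_logisticFn.measurable.comp (by fun_prop))
      |>.comp (by fun_prop)).aestronglyMeasurable
  have hsplit : ∫ w, logisticFn (a + c * w) ∂gaussianReal 0 v
      = stdNormalCDF (κ * a / s) - ∫ w, deltaFn (κ * (a + c * w)) ∂gaussianReal 0 v := by
    have hpt (w : ℝ) : logisticFn (a + c * w)
        = stdNormalCDF (κ * a + κ * c * w) - deltaFn (κ * (a + c * w)) := by
      rw [hσ, mul_add, mul_assoc]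
    simp_rw [hpt]
    rw [integral_sub hΦ hδ, integral_stdNormalCDF_affine_gaussianReal, mul_pow, hκ, mul_assoc]
  have hmean : |∫ w, deltaFn (κ * (a + c * w)) ∂gaussianReal 0 v| ≤ ⨆ t, |deltaFn t| := by
    simpa using norm_integral_le_of_norm_le_const (ae_of_all (gaussianReal 0 v) fun w ↦
      (Real.norm_eq_abs _).trans_le (abs_deltaFn_le_iSup (κ * (a + c * w))))
  rw [hsplit, hσ (a / s), mul_div_assoc, sub_sub_sub_cancel_left]
  calc _ ≤ |deltaFn (κ * (a / s))| + |∫ w, deltaFn (κ * (a + c * w)) ∂gaussianReal 0 v| :=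
        abs_sub _ _
    _ ≤ 2 * ⨆ t, |deltaFn t| := by linarith [abs_deltaFn_le_iSup (κ * (a / s))]

theorem ProbabilityTheory.IndepFun.condExp_ae_eq_integral_map {Ω β γ F : Type*}
    {mΩ : MeasurableSpace Ω} {mβ : MeasurableSpace β} [MeasurableSpace γ] [StandardBorelSpace γ]
    [Nonempty γ] [NormedAddCommGroup F] [NormedSpace ℝ F] [CompleteSpace F]
    {μ : Measure Ω} [IsFiniteMeasure μ] {X : Ω → β} {Y : Ω → γ} (hXY : IndepFun X Y μ)
    (hX : Measurable X) (hY : AEMeasurable Y μ) {f : β × γ → F} (hf : StronglyMeasurable f)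
    (hf_int : Integrable (fun ω ↦ f (X ω, Y ω)) μ) :
    μ[fun ω ↦ f (X ω, Y ω) | mβ.comap X] =ᵐ[μ] fun ω ↦ ∫ y, f (X ω, y) ∂μ.map Y := by
  have hκ : condDistrib Y X μ =ᵐ[μ.map X] Kernel.const β (μ.map Y) :=
    condDistrib_ae_eq_of_measure_eq_compProd X hY <| by
      rw [Measure.compProd_const, hXY.map_prod_eq_prod_map_map hX.aemeasurable hY]
  filter_upwards [condExp_prod_ae_eq_integral_condDistrib hX hY hf hf_int,
    ae_of_ae_map hX.aemeasurable hκ] with ω hω hκω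
  rw [hω, hκω, Kernel.const_apply]

theorem logistic_condexp_bivariate_bound_general {Ω : Type*} [MeasurableSpace Ω]
    (P : Measure Ω) [IsProbabilityMeasure P]
    (X₁ W : Ω → ℝ) (hX₁ : Measurable X₁) (hW : Measurable W)
    (μ₁ μ₂ σ₁ σ₂ ρ : ℝ)
    (hindep : IndepFun X₁ W P)
    (vW : ℝ≥0) (hvW : (vW : ℝ) = (1 - ρ ^ 2) * σ₂ ^ 2)
    (hWdist : P.map W = gaussianReal 0 vW)
    (X₂ : Ω → ℝ) (hX₂ : ∀ ω, X₂ ω = μ₂ + ρ * (σ₂ / σ₁) * (X₁ ω - μ₁) + W ω)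
    (β₀ β₁ β₂ : ℝ) :
    ∀ᵐ ω ∂P,
      |(P[fun ω => logisticFn (β₀ + β₁ * X₁ ω + β₂ * X₂ ω) |
            MeasurableSpace.comap X₁ inferInstance]) ω -
          logisticFn (((β₀ + β₂ * μ₂ - β₂ * ρ * (σ₂ / σ₁) * μ₁)
              + (β₁ + β₂ * ρ * σ₂ / σ₁) * X₁ ω) /
            Real.sqrt (1 + (Real.pi / 8) * (β₂ ^ 2 * (1 - ρ ^ 2) * σ₂ ^ 2)))| ≤
        2 * ⨆ t : ℝ, |deltaFn t| := by
  set α₀ := β₀ + β₂ * μ₂ - β₂ * ρ * (σ₂ / σ₁) * μ₁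
  set α₁ := β₁ + β₂ * ρ * σ₂ / σ₁
  set f : ℝ × ℝ → ℝ := fun p ↦ logisticFn (α₀ + α₁ * p.1 + β₂ * p.2)
  have hf : Continuous f := continuous_logisticFn.comp (by fun_prop)
  have hfX : (fun ω ↦ logisticFn (β₀ + β₁ * X₁ ω + β₂ * X₂ ω)) = fun ω ↦ f (X₁ ω, W ω) := by
    ext ω; simp only [f, α₀, α₁, hX₂]; ring_nf
  have hf_int : Integrable (fun ω ↦ f (X₁ ω, W ω)) P :=
    .of_bound (hf.measurable.comp (hX₁.prodMk hW)).aestronglyMeasurable 1 (ae_of_all _ fun ω ↦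
      (Real.norm_of_nonneg (logisticFn_nonneg _)).trans_le (logisticFn_le_one _))
  rw [hfX]
  filter_upwards [hindep.condExp_ae_eq_integral_map hX₁ hW.aemeasurable hf.stronglyMeasurable
    hf_int] with ω hω
  have hv : β₂ ^ 2 * (1 - ρ ^ 2) * σ₂ ^ 2 = β₂ ^ 2 * vW := by rw [hvW]; ring
  rw [hω, hWdist, hv]
  exact abs_integral_logisticFn_gaussianReal_sub_le (α₀ + α₁ * X₁ ω) β₂ vW

/-- Two-dimensional instance of Theorem 2: with `X₁ ~ N(μ₁, σ₁²)`, `σ₁ > 0`,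
`W ~ N(0, (1−ρ²)σ₂²)` independent of `X₁`, and `X₂ = μ₂ + ρ (σ₂/σ₁)(X₁ − μ₁) + W`
(so that `(X₁, X₂)` is bivariate Gaussian with correlation `ρ`), for all `β₀ β₁ β₂` a.s.
`|E[σ(β₀ + β₁X₁ + β₂X₂)|σ(X₁)] − σ((α₀ + α₁X₁)/√(1 + (π/8)β₂²(1−ρ²)σ₂²))| ≤ 2‖δ‖_∞`,
where `α₀ = β₀ + β₂μ₂ − β₂ρ(σ₂/σ₁)μ₁` and `α₁ = β₁ + β₂ρσ₂/σ₁`. -/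
theorem logistic_condexp_bivariate_bound {Ω : Type*} [MeasurableSpace Ω]
    (P : Measure Ω) [IsProbabilityMeasure P]
    (X₁ W : Ω → ℝ) (hX₁ : Measurable X₁) (hW : Measurable W)
    (μ₁ μ₂ σ₁ σ₂ ρ : ℝ) (hσ₁ : 0 < σ₁) (hσ₂ : 0 ≤ σ₂)
    (hρ : ρ ∈ Set.Icc (-1 : ℝ) 1)
    (v₁ : ℝ≥0) (hv₁ : (v₁ : ℝ) = σ₁ ^ 2)
    (hX₁dist : P.map X₁ = gaussianReal μ₁ v₁)
    (hindep : IndepFun X₁ W P)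
    (vW : ℝ≥0) (hvW : (vW : ℝ) = (1 - ρ ^ 2) * σ₂ ^ 2) (hvWpos : 0 < vW)
    (hWdist : P.map W = gaussianReal 0 vW)
    (X₂ : Ω → ℝ) (hX₂ : ∀ ω, X₂ ω = μ₂ + ρ * (σ₂ / σ₁) * (X₁ ω - μ₁) + W ω)
    (β₀ β₁ β₂ : ℝ) :
    ∀ᵐ ω ∂P,
      |(P[fun ω => logisticFn (β₀ + β₁ * X₁ ω + β₂ * X₂ ω) |
            MeasurableSpace.comap X₁ inferInstance]) ω -
          logisticFn (((β₀ + β₂ * μ₂ - β₂ * ρ * (σ₂ / σ₁) * μ₁)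
              + (β₁ + β₂ * ρ * σ₂ / σ₁) * X₁ ω) /
            Real.sqrt (1 + (Real.pi / 8) * (β₂ ^ 2 * (1 - ρ ^ 2) * σ₂ ^ 2)))| ≤
        2 * ⨆ t : ℝ, |deltaFn t| :=
  logistic_condexp_bivariate_bound_general P X₁ W hX₁ hW μ₁ μ₂ σ₁ σ₂ ρ hindep vW hvW hWdist X₂ hX₂
    β₀ β₁ β₂
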